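/- Let f : ℝ^n × ℝ^n → ℝ^m be a bifunction, C ⊆ ℝ^m a nontrivial closed convex pointed cone, K ⊆ ℝ^n nonempty, closed and convex, and let x̄ ∈ Equi and z₀ ∈ K with f(x̄,z₀) = 0. If f is strictly B-differentiable at x̄ uniformly on K with a family {D_Bf(x̄,z) : z ∈ K} that is equicontinuous at each point of ℝ^n, then T(x̄,Equi) ⊆ (D_Bf(x̄,z₀))⁻¹(C) ∩ T(x̄,K). -/

import Mathlib

open Filter Metric Set Pointwise
open scoped InnerProductSpace Topology

noncomputable section

/-- `ℝ^d` as a Euclidean space. -/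
abbrev Euc (d : ℕ) := EuclideanSpace ℝ (Fin d)

/-- The contingent (Bouligand tangent) cone to `S` at `x`:
`T(x,S) = {v : ∃ vₙ → v, tₙ ↓ 0, x + tₙ vₙ ∈ S for all n}`. -/
def contCone {d : ℕ} (S : Set (Euc d)) (x : Euc d) : Set (Euc d) :=
  {v | ∃ (vs : ℕ → Euc d) (ts : ℕ → ℝ),
    Filter.Tendsto vs Filter.atTop (𝓝 v) ∧ Filter.Tendsto ts Filter.atTop (𝓝 0) ∧
    (∀ k, 0 < ts k) ∧ ∀ k, x + ts k • vs k ∈ S}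

/-- The cone of radial (weak feasible) directions to `S` at `x`:
`W(x,S) = {v : ∀ ε > 0, ∃ t ∈ (0,ε), x + t v ∈ S}`. -/
def radialCone {d : ℕ} (S : Set (Euc d)) (x : Euc d) : Set (Euc d) :=
  {v | ∀ ε > (0:ℝ), ∃ t : ℝ, 0 < t ∧ t < ε ∧ x + t • v ∈ S}

/-- The set of strong vector equilibria: `Equi = {x ∈ K : f(x,z) ∈ C for all z ∈ K}`. -/
def Equi {n m : ℕ} (f : Euc n → Euc n → Euc m) (C : Set (Euc m)) (K : Set (Euc n)) :
    Set (Euc n) :=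
  {x ∈ K | ∀ z ∈ K, f x z ∈ C}

/-- The negative dual (polar) cone `S° = {v : ⟪v,s⟫ ≤ 0 for all s ∈ S}`. -/
def negDualCone {d : ℕ} (S : Set (Euc d)) : Set (Euc d) :=
  {v | ∀ s ∈ S, ⟪v, s⟫_ℝ ≤ 0}

/-- The normal cone of convex analysis `N(x,S) = {v : ⟪v, y - x⟫ ≤ 0 for all y ∈ S}`. -/
def normalCone {d : ℕ} (S : Set (Euc d)) (x : Euc d) : Set (Euc d) :=
  {v | ∀ y ∈ S, ⟪v, y - x⟫_ℝ ≤ 0}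

/-!
Along a contingent sequence `x̄ + tₖvₖ ∈ Equi`, the difference quotients
`tₖ⁻¹ (f(x̄ + tₖvₖ, z₀) - f(x̄, z₀)) = tₖ⁻¹ f(x̄ + tₖvₖ, z₀)` lie in the cone `C`, and by the
B-differentiability of `f(·, z₀)` at `x̄` they converge to `D_Bf(x̄,z₀) v`; as `C` is closed,
the limit lies in `C`. The inclusion `T(x̄,Equi) ⊆ T(x̄,K)` is monotonicity of the contingent cone.
-/

open Asymptotics

theorem contCone_mono {d : ℕ} {S T : Set (Euc d)} (hST : S ⊆ T) (x : Euc d) :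
    contCone S x ⊆ contCone T x := fun _ ⟨vs, ts, hvs, hts, htpos, hmem⟩ =>
  ⟨vs, ts, hvs, hts, htpos, fun k => hST (hmem k)⟩

theorem tendsto_inv_smul_sub_of_isLittleO {E F : Type*} [NormedAddCommGroup E] [NormedSpace ℝ E]
    [NormedAddCommGroup F] [NormedSpace ℝ F] {g L : E → F} {x v : E} {vs : ℕ → E} {ts : ℕ → ℝ}
    (hg : (fun y => g y - g x - L (y - x)) =o[𝓝 x] (fun y => y - x))
    (hL : ContinuousAt L v) (hLhom : ∀ t : ℝ, 0 < t → ∀ w, L (t • w) = t • L w)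
    (hvs : Tendsto vs atTop (𝓝 v)) (hts : Tendsto ts atTop (𝓝 0)) (htpos : ∀ k, 0 < ts k) :
    Tendsto (fun k => (ts k)⁻¹ • (g (x + ts k • vs k) - g x)) atTop (𝓝 (L v)) := by
  set r : ℕ → F := fun k => g (x + ts k • vs k) - g x - L (ts k • vs k)
  have hpts : Tendsto (fun k => x + ts k • vs k) atTop (𝓝 x) := by
    simpa using tendsto_const_nhds.add (hts.smul hvs)
  have hr : r =o[atTop] fun k => ts k • vs k := by
    simpa only [Function.comp_def, add_sub_cancel_left] using hg.comp_tendsto hpts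
  have hquot : (fun k => (ts k)⁻¹ • r k) =o[atTop] vs :=
    ((isBigO_refl (fun k => (ts k)⁻¹) atTop).smul_isLittleO hr).congr_right fun k => by
      simp only [inv_smul_smul₀ (htpos k).ne']
  have hsplit : ∀ k, (ts k)⁻¹ • (g (x + ts k • vs k) - g x) = (ts k)⁻¹ • r k + L (vs k) := by
    intro k
    simp only [r, hLhom _ (htpos k), smul_sub, inv_smul_smul₀ (htpos k).ne', sub_add_cancel]
  simpa only [hsplit, Function.comp_apply, zero_add] using
    (isLittleO_one_iff ℝ).1 (hquot.trans_isBigO (hvs.isBigO_one ℝ)) |>.add (hL.tendsto.comp hvs)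

theorem outer_approximation_at_zero_general {n m : ℕ}
    (f : Euc n → Euc n → Euc m) (C : Set (Euc m)) (K : Set (Euc n))
    (hCclosed : IsClosed C)
    (hCcone : ∀ c ∈ C, ∀ t : ℝ, 0 < t → t • c ∈ C)
    (xb : Euc n)
    (z₀ : Euc n) (hz₀ : z₀ ∈ K) (hfz₀ : f xb z₀ = 0)
    (D : Euc n → Euc n → Euc m)
    (hDcont : ∀ z ∈ K, Continuous (D z))
    (hDph : ∀ z ∈ K, ∀ t : ℝ, 0 < t → ∀ v, D z (t • v) = t • D z v)
    (hStrict : ∀ ε > (0:ℝ), ∃ δ > (0:ℝ), ∀ x₁ ∈ ball xb δ, ∀ x₂ ∈ ball xb δ, ∀ z ∈ K,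
      ‖f x₁ z - f x₂ z - D z (x₁ - x₂)‖ ≤ ε * ‖x₁ - x₂‖)
 :
    contCone (Equi f C K) xb ⊆ D z₀ ⁻¹' C ∩ contCone K xb := by
  intro v hv
  refine ⟨?_, contCone_mono (fun _ hx => hx.1) xb hv⟩
  obtain ⟨vs, ts, hvs, hts, htpos, hmem⟩ := hv
  have hBdiff : (fun x => f x z₀ - f xb z₀ - D z₀ (x - xb)) =o[𝓝 xb] fun x => x - xb :=
    isLittleO_iff.2 fun ε hε => by
      obtain ⟨δ, hδ, hest⟩ := hStrict ε hε
      filter_upwards [ball_mem_nhds xb hδ] with x hx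
        using hest x hx xb (mem_ball_self hδ) z₀ hz₀
  refine hCclosed.mem_of_tendsto (tendsto_inv_smul_sub_of_isLittleO hBdiff
    (hDcont z₀ hz₀).continuousAt (hDph z₀ hz₀) hvs hts htpos) (Eventually.of_forall fun k => ?_)
  rw [hfz₀, sub_zero]
  exact hCcone _ ((hmem k).2 z₀ hz₀) _ (inv_pos.2 (htpos k))

/-- **Outer approximation at a zero of `f(xb,·)`** (Remark 3.5(ii)): if `f(xb,z₀) = 0` for
some `z₀ ∈ K`, then `T(xb,Equi) ⊆ (D_Bf(xb,z₀))⁻¹(C) ∩ T(xb,K)`. -/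
theorem outer_approximation_at_zero {n m : ℕ}
    (f : Euc n → Euc n → Euc m) (C : Set (Euc m)) (K : Set (Euc n))
    (hCclosed : IsClosed C) (hCconvex : Convex ℝ C)
    (hCzero : (0 : Euc m) ∈ C)
    (hCcone : ∀ c ∈ C, ∀ t : ℝ, 0 < t → t • c ∈ C)
    (hCpointed : ∀ c ∈ C, -c ∈ C → c = 0)
    (hCnontrivial : ∃ c ∈ C, c ≠ 0)
    (hKne : K.Nonempty) (hKclosed : IsClosed K) (hKconv : Convex ℝ K)
    (xb : Euc n) (hxb : xb ∈ Equi f C K)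
    (z₀ : Euc n) (hz₀ : z₀ ∈ K) (hfz₀ : f xb z₀ = 0)
    (D : Euc n → Euc n → Euc m)
    (hDcont : ∀ z ∈ K, Continuous (D z))
    (hDph : ∀ z ∈ K, ∀ t : ℝ, 0 < t → ∀ v, D z (t • v) = t • D z v)
    (hStrict : ∀ ε > (0:ℝ), ∃ δ > (0:ℝ), ∀ x₁ ∈ ball xb δ, ∀ x₂ ∈ ball xb δ, ∀ z ∈ K,
      ‖f x₁ z - f x₂ z - D z (x₁ - x₂)‖ ≤ ε * ‖x₁ - x₂‖)
    (hEqui : Equicontinuous (fun z : {z // z ∈ K} => D z.1))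
 :
    contCone (Equi f C K) xb ⊆ D z₀ ⁻¹' C ∩ contCone K xb :=
  outer_approximation_at_zero_general f C K hCclosed hCcone xb z₀ hz₀ hfz₀ D hDcont hDph hStrict
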